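/- Let K = (G,M,I) be a finite formal context whose interordinal scaling dimension is defined, and let w denote the width of the partially ordered set (under set inclusion) of meet-irreducible extents of K. Then w/2 ≤ isd(K) ≤ w, i.e., the interordinal scaling dimension of K is at least w/2 and at most w. -/

import Mathlib

/-!
A family of ladders generating all extents under intersection must contain every
meet-irreducible extent, and a ladder, having no three pairwise incomparable members, meets an
antichain in at most two sets; hence `w ≤ 2 · isd K`. Conversely, Dilworth's theorem splits the
meet-irreducible extents into `w` chains. Their complements are extents as well (they lie in the
ladders of any generating family), so each chain together with the complements of its members
is a ladder, and these `w` ladders generate every extent because every extent is the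
intersection of the meet-irreducible extents above it.
-/

/-- `E` is an extent of the formal context `(G, M, I)`. -/
def IsExtent {G M : Type*} (I : G → M → Prop) (E : Set G) : Prop :=
  ∃ B : Set M, E = {g | ∀ m ∈ B, I g m}

/-- A meet-irreducible extent: an extent `E ≠ G` that is not the intersection of the
extents properly containing it. -/
def IsMeetIrreducibleExtent {G M : Type*} (I : G → M → Prop) (E : Set G) : Prop :=
  IsExtent I E ∧ E ≠ Set.univ ∧ E ≠ ⋂₀ {F | IsExtent I F ∧ E ⊂ F}

/-- An extent ladder of `K = (G, M, I)`: a set of nonempty extents containing no three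
pairwise `⊆`-incomparable members and closed under complementation in `G`. -/
def IsExtentLadder {G M : Type*} (I : G → M → Prop) (R : Set (Set G)) : Prop :=
  (∀ A ∈ R, IsExtent I A ∧ A.Nonempty) ∧
  (¬ ∃ A ∈ R, ∃ B ∈ R, ∃ C ∈ R,
    (¬ A ⊆ B ∧ ¬ B ⊆ A) ∧ (¬ A ⊆ C ∧ ¬ C ⊆ A) ∧ (¬ B ⊆ C ∧ ¬ C ⊆ B)) ∧
  (∀ A ∈ R, Aᶜ ∈ R)

/-- `K` has interordinal scaling dimension at most `d`. -/
def HasISDAtMost {G M : Type*} (I : G → M → Prop) (d : ℕ) : Prop :=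
  ∃ R : Fin d → Set (Set G), (∀ i, IsExtentLadder I (R i)) ∧
    {E | IsExtent I E} = {E | ∃ F ⊆ ⋃ i, R i, E = ⋂₀ F}

/-- The interordinal scaling dimension: the least `d` such that `HasISDAtMost I d`. -/
noncomputable def isd {G M : Type*} (I : G → M → Prop) : ℕ :=
  sInf {d | HasISDAtMost I d}

/-- The width of a family `S` of subsets of `G`, partially ordered by inclusion: the
maximal cardinality of an antichain contained in `S`. -/
noncomputable def posetWidth {G : Type*} (S : Set (Set G)) : ℕ :=
  sSup {n | ∃ A ⊆ S, A.Finite ∧ IsAntichain (· ⊆ ·) A ∧ A.ncard = n}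

section Dilworth

open Finset Relation

variable {α : Type*} [PartialOrder α]

/-- The elements of `S` above no other element of `S` form an antichain: this is the deficiency
form of Hall's condition behind Dilworth's theorem. -/
theorem card_le_card_strictUpperNeighbourhood_add [Fintype α] [DecidableEq α] [DecidableLT α]
    {w : ℕ} (hw : ∀ s : Finset α, IsAntichain (· ≤ ·) (s : Set α) → #s ≤ w) (S : Finset α) :
    #S ≤ #({y | ∃ x ∈ S, x < y} : Finset α) + w := by
  set N : Finset α := {y | ∃ x ∈ S, x < y}
  have hmin : IsAntichain (· ≤ ·) (({x ∈ S | x ∉ N} : Finset α) : Set α) := by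
    intro x hx y hy hne hle
    simp only [coe_filter, Set.mem_ofPred_eq] at hx hy
    exact hy.2 (mem_filter.2 ⟨mem_univ y, x, hx.1, lt_of_le_of_ne hle hne⟩)
  calc #S = #{x ∈ S | x ∈ N} + #{x ∈ S | x ∉ N} := (card_filter_add_card_filter_not _).symm
    _ ≤ #N + w := add_le_add (card_le_card fun x hx => (mem_filter.1 hx).2) (hw _ hmin)

/-- Following the matching `f` upwards from `x` ends at an element matched with some `i : β`,
the colour of `x`; by injectivity, two such paths with the same end are nested. -/
theorem exists_chain_coloring_of_injective_sum [WellFoundedGT α] {β : Type*} {f : α → α ⊕ β}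
    (hf_inj : Function.Injective f) (hf : ∀ x y, f x = .inl y → x < y) :
    ∃ c : α → β, ∀ i, IsChain (· ≤ ·) (c ⁻¹' {i}) := by
  let r : α → α → Prop := fun x y => f x = .inl y
  have hr_le : ∀ {x y}, ReflTransGen r x y → x ≤ y := fun h => by
    induction h with
    | refl => exact le_rfl
    | tail _ hyz ih => exact ih.trans (hf _ _ hyz).le
  have hr_unique : Relator.RightUnique (Function.swap r) := fun _ _ _ h₁ h₂ =>
    hf_inj (h₁.trans h₂.symm)
  have hend : ∀ x, ∃ e i, ReflTransGen r x e ∧ f e = .inr i := by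
    intro x
    induction x using WellFoundedGT.induction with
    | _ x ih =>
    rcases hfx : f x with y | i
    · obtain ⟨e, i, hye, hei⟩ := ih y (hf x y hfx)
      exact ⟨e, i, ReflTransGen.head hfx hye, hei⟩
    · exact ⟨x, i, ReflTransGen.refl, hfx⟩
  choose e c hxe hec using hend
  refine ⟨c, fun i x hx y hy _ => ?_⟩
  have hexy : e x = e y := hf_inj ((hec x).trans (hx.trans hy.symm ▸ hec y).symm)
  rcases ReflTransGen.total_of_right_unique hr_unique (reflTransGen_swap.2 (hxe x))
    (hexy ▸ reflTransGen_swap.2 (hxe y)) with h | h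
  · exact .inr (hr_le (reflTransGen_swap.1 h))
  · exact .inl (hr_le (reflTransGen_swap.1 h))

/-- Dilworth's theorem. By Hall's theorem every element is matched injectively either with a
strictly larger element or with one of `w` spare slots. -/
theorem exists_chain_coloring_of_card_antichain_le [Fintype α] {w : ℕ}
    (hw : ∀ s : Finset α, IsAntichain (· ≤ ·) (s : Set α) → #s ≤ w) :
    ∃ c : α → Fin w, ∀ i, IsChain (· ≤ ·) (c ⁻¹' {i}) := by
  classical
  let t : α → Finset (α ⊕ Fin w) := fun x => ({y | x < y} : Finset α).disjSum univ
  have hall : ∀ S : Finset α, #S ≤ #(S.biUnion t) := by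
    intro S
    rcases S.eq_empty_or_nonempty with rfl | ⟨x₀, hx₀⟩
    · simp
    calc #S ≤ #({y | ∃ x ∈ S, x < y} : Finset α) + w :=
          card_le_card_strictUpperNeighbourhood_add hw S
      _ = #(({y | ∃ x ∈ S, x < y} : Finset α).disjSum (univ : Finset (Fin w))) := by
        rw [card_disjSum, card_univ, Fintype.card_fin]
      _ ≤ #(S.biUnion t) := by
        refine card_le_card fun z hz => ?_
        rcases z with y | i
        · obtain ⟨x, hx, hxy⟩ := (mem_filter.1 (inl_mem_disjSum.1 hz)).2
          exact mem_biUnion.2 ⟨x, hx, inl_mem_disjSum.2 (mem_filter.2 ⟨mem_univ y, hxy⟩)⟩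
        · exact mem_biUnion.2 ⟨x₀, hx₀, inr_mem_disjSum.2 (mem_univ i)⟩
  obtain ⟨f, hf_inj, hf⟩ := (all_card_le_biUnion_card_iff_exists_injective t).1 hall
  refine exists_chain_coloring_of_injective_sum hf_inj fun x y hxy => ?_
  have hfx := hf x
  rwa [hxy, inl_mem_disjSum, mem_filter, and_iff_right (mem_univ y)] at hfx

end Dilworth

section Extent

variable {G M : Type*} {I : G → M → Prop}

theorem isExtent_sInter {F : Set (Set G)} (hF : ∀ A ∈ F, IsExtent I A) : IsExtent I (⋂₀ F) := by
  choose B hB using hF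
  refine ⟨⋃ (A) (hA : A ∈ F), B A hA, Set.ext fun g => ?_⟩
  simp only [Set.mem_sInter, Set.mem_iUnion, Set.mem_ofPred_eq, forall_exists_index]
  constructor
  · intro hg m A hA hm
    exact (hB A hA ▸ hg A hA) m hm
  · intro hg A hA
    rw [hB A hA]
    exact fun m hm => hg m A hA hm

theorem IsMeetIrreducibleExtent.mem_of_eq_sInter {E : Set G} (hE : IsMeetIrreducibleExtent I E)
    {F : Set (Set G)} (hF : ∀ A ∈ F, IsExtent I A) (hEF : E = ⋂₀ F) : E ∈ F := by
  by_contra hEF'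
  refine hE.2.2 (subset_antisymm (Set.subset_sInter fun A hA => hA.2.subset) ?_)
  calc ⋂₀ {A | IsExtent I A ∧ E ⊂ A} ⊆ ⋂₀ F := Set.sInter_subset_sInter fun A hA =>
        ⟨hF A hA, (hEF ▸ Set.sInter_subset_of_mem hA).ssubset_of_ne fun h => hEF' (h ▸ hA)⟩
    _ = E := hEF.symm

theorem sInter_meetIrreducibleExtent_supsets_subset [Finite G] {E : Set G} (hE : IsExtent I E) :
    ⋂₀ {F | IsMeetIrreducibleExtent I F ∧ E ⊆ F} ⊆ E := by
  induction E using WellFoundedGT.induction with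
  | _ E ih =>
  by_cases hirr : IsMeetIrreducibleExtent I E
  · exact Set.sInter_subset_of_mem ⟨hirr, le_rfl⟩
  by_cases huniv : E = Set.univ
  · exact huniv ▸ Set.subset_univ _
  have hE_eq : E = ⋂₀ {F | IsExtent I F ∧ E ⊂ F} := by_contra fun h => hirr ⟨hE, huniv, h⟩
  refine (Set.subset_sInter fun F hF => ?_).trans hE_eq.ge
  have hsupsets : {A | IsMeetIrreducibleExtent I A ∧ F ⊆ A} ⊆
      {A | IsMeetIrreducibleExtent I A ∧ E ⊆ A} := fun A hA => ⟨hA.1, hF.2.subset.trans hA.2⟩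
  exact (Set.sInter_subset_sInter hsupsets).trans (ih F hF.2 hF.1)

end Extent

section Ladder

variable {G M : Type*} {I : G → M → Prop}

theorem IsChain.image_compl {C : Set (Set G)} (hC : IsChain (· ⊆ ·) C) :
    IsChain (· ⊆ ·) (compl '' C) := by
  rintro _ ⟨A, hA, rfl⟩ _ ⟨B, hB, rfl⟩ -
  exact (hC.total hB hA).imp Set.compl_subset_compl.2 Set.compl_subset_compl.2

theorem IsChain.not_three_pairwise_incomparable_union {C₁ C₂ : Set (Set G)}
    (h₁ : IsChain (· ⊆ ·) C₁) (h₂ : IsChain (· ⊆ ·) C₂) :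
    ¬ ∃ A ∈ C₁ ∪ C₂, ∃ B ∈ C₁ ∪ C₂, ∃ D ∈ C₁ ∪ C₂,
      (¬ A ⊆ B ∧ ¬ B ⊆ A) ∧ (¬ A ⊆ D ∧ ¬ D ⊆ A) ∧ (¬ B ⊆ D ∧ ¬ D ⊆ B) := by
  rintro ⟨A, hA, B, hB, D, hD, hAB, hAD, hBD⟩
  simp only [← not_or] at hAB hAD hBD
  rcases hA with hA | hA <;> rcases hB with hB | hB <;> rcases hD with hD | hD <;>
    first
    | exact hAB (h₁.total hA hB) | exact hAB (h₂.total hA hB)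
    | exact hAD (h₁.total hA hD) | exact hAD (h₂.total hA hD)
    | exact hBD (h₁.total hB hD) | exact hBD (h₂.total hB hD)

theorem IsChain.isExtentLadder_union_image_compl {C : Set (Set G)} (hC : IsChain (· ⊆ ·) C)
    (hext : ∀ A ∈ C, (IsExtent I A ∧ A.Nonempty) ∧ (IsExtent I Aᶜ ∧ Aᶜ.Nonempty)) :
    IsExtentLadder I (C ∪ compl '' C) := by
  refine ⟨?_, hC.not_three_pairwise_incomparable_union hC.image_compl, ?_⟩
  · rintro _ (hA | ⟨A, hA, rfl⟩)
    exacts [(hext _ hA).1, (hext A hA).2]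
  · rintro _ (hA | ⟨A, hA, rfl⟩)
    · exact .inr ⟨_, hA, rfl⟩
    · exact .inl ((compl_compl A).symm ▸ hA)

theorem IsExtentLadder.ncard_inter_le_two {R A : Set (Set G)} (hR : IsExtentLadder I R)
    (hA : IsAntichain (· ⊆ ·) A) : (R ∩ A).ncard ≤ 2 := by
  by_contra! h
  obtain ⟨X, hX, Y, hY, Z, hZ, hXY, hXZ, hYZ⟩ :=
    (Set.two_lt_ncard (Set.finite_of_ncard_pos (by omega))).1 h
  exact hR.2.1 ⟨X, hX.1, Y, hY.1, Z, hZ.1,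
    ⟨hA hX.2 hY.2 hXY, hA hY.2 hX.2 hXY.symm⟩, ⟨hA hX.2 hZ.2 hXZ, hA hZ.2 hX.2 hXZ.symm⟩,
    ⟨hA hY.2 hZ.2 hYZ, hA hZ.2 hY.2 hYZ.symm⟩⟩

theorem IsMeetIrreducibleExtent.exists_mem_ladder {d : ℕ} {R : Fin d → Set (Set G)}
    (hR : ∀ i, IsExtentLadder I (R i))
    (hgen : {E | IsExtent I E} = {E | ∃ F ⊆ ⋃ i, R i, E = ⋂₀ F}) {E : Set G}
    (hE : IsMeetIrreducibleExtent I E) : ∃ i, E ∈ R i := by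
  obtain ⟨F, hFR, hEF⟩ := (Set.ext_iff.1 hgen E).1 hE.1
  have hF : ∀ A ∈ F, IsExtent I A := fun A hA => by
    obtain ⟨i, hi⟩ := Set.mem_iUnion.1 (hFR hA)
    exact ((hR i).1 A hi).1
  exact Set.mem_iUnion.1 (hFR (hE.mem_of_eq_sInter hF hEF))

end Ladder

section Width

variable {G M : Type*} {I : G → M → Prop}

theorem ncard_le_posetWidth [Finite G] {S A : Set (Set G)} (hAS : A ⊆ S)
    (hA : IsAntichain (· ⊆ ·) A) : A.ncard ≤ posetWidth S :=
  le_csSup ⟨Nat.card (Set G), by rintro _ ⟨B, -, -, -, rfl⟩; exact Set.ncard_le_card B⟩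
    ⟨A, hAS, Set.toFinite A, hA, rfl⟩

theorem HasISDAtMost.posetWidth_le {d : ℕ} (h : HasISDAtMost I d) :
    posetWidth {E | IsMeetIrreducibleExtent I E} ≤ 2 * d := by
  obtain ⟨R, hR, hgen⟩ := h
  refine csSup_le ⟨0, ∅, Set.empty_subset _, Set.finite_empty,
    Set.subsingleton_empty.isAntichain _, Set.ncard_empty _⟩ ?_
  rintro _ ⟨A, hAS, -, hA, rfl⟩
  have hcover : A = ⋃ i, R i ∩ A := by
    refine subset_antisymm (fun E hE => ?_) (Set.iUnion_subset fun i => Set.inter_subset_right)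
    obtain ⟨i, hi⟩ := (hAS hE).exists_mem_ladder hR hgen
    exact Set.mem_iUnion.2 ⟨i, hi, hE⟩
  calc A.ncard = (⋃ i, R i ∩ A).ncard := congrArg _ hcover
    _ ≤ ∑ i, (R i ∩ A).ncard := Set.ncard_iUnion_le_of_fintype _
    _ ≤ ∑ _i : Fin d, 2 := Finset.sum_le_sum fun i _ => (hR i).ncard_inter_le_two hA
    _ = 2 * d := by simp [mul_comm]

theorem HasISDAtMost.hasISDAtMost_posetWidth [Finite G] {d : ℕ} (h : HasISDAtMost I d) :
    HasISDAtMost I (posetWidth {E | IsMeetIrreducibleExtent I E}) := by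
  obtain ⟨R, hR, hgen⟩ := h
  set S := {E | IsMeetIrreducibleExtent I E}
  have hext : ∀ E ∈ S, (IsExtent I E ∧ E.Nonempty) ∧ (IsExtent I Eᶜ ∧ Eᶜ.Nonempty) := by
    intro E hE
    obtain ⟨i, hi⟩ := hE.exists_mem_ladder hR hgen
    exact ⟨(hR i).1 E hi, (hR i).1 _ ((hR i).2.2 E hi)⟩
  have := Fintype.ofFinite S
  obtain ⟨c, hc⟩ := exists_chain_coloring_of_card_antichain_le (α := S) fun s hs => by
    rw [← Set.ncard_coe_finset, ← Set.ncard_image_of_injective _ Subtype.val_injective]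
    exact ncard_le_posetWidth (by rintro _ ⟨E, -, rfl⟩; exact E.2) (hs.image _ fun _ _ h => h)
  let C : Fin (posetWidth S) → Set (Set G) := fun i => Subtype.val '' (c ⁻¹' {i})
  have hladder : ∀ i, IsExtentLadder I (C i ∪ compl '' C i) := fun i =>
    ((hc i).image_of_map_rel _ (· ⊆ · : Set G → Set G → Prop) Subtype.val fun _ _ h => h)
      |>.isExtentLadder_union_image_compl (by rintro _ ⟨E, -, rfl⟩; exact hext E E.2)
  refine ⟨fun i => C i ∪ compl '' C i, hladder, Set.ext fun E => ⟨fun hE => ?_, ?_⟩⟩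
  · refine ⟨{F | IsMeetIrreducibleExtent I F ∧ E ⊆ F}, fun F hF => ?_,
      subset_antisymm (Set.subset_sInter fun F hF => hF.2)
        (sInter_meetIrreducibleExtent_supsets_subset hE)⟩
    exact Set.mem_iUnion.2 ⟨c ⟨F, hF.1⟩, .inl ⟨⟨F, hF.1⟩, rfl, rfl⟩⟩
  · rintro ⟨F, hF, rfl⟩
    refine isExtent_sInter fun A hA => ?_
    obtain ⟨i, hi⟩ := Set.mem_iUnion.1 (hF hA)
    exact ((hladder i).1 A hi).1

end Width

theorem isd_bounds_via_width_general {G M : Type*} [Fintype G] (I : G → M → Prop)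
    (hdef : ∃ d, HasISDAtMost I d) :
    posetWidth {E | IsMeetIrreducibleExtent I E} / 2 ≤ isd I ∧
    isd I ≤ posetWidth {E | IsMeetIrreducibleExtent I E} := by
  obtain ⟨d, hd⟩ := hdef
  have hisd : HasISDAtMost I (isd I) := Nat.sInf_mem (s := {d | HasISDAtMost I d}) ⟨d, hd⟩
  exact ⟨Nat.div_le_of_le_mul hisd.posetWidth_le, Nat.sInf_le hd.hasISDAtMost_posetWidth⟩

/-- For a finite formal context whose interordinal scaling dimension is
defined, if `w` is the width of the ordered set of meet-irreducible extents, then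
`w/2 ≤ isd K ≤ w`. -/
theorem isd_bounds_via_width {G M : Type*} [Fintype G] [Fintype M] (I : G → M → Prop)
    (hdef : ∃ d, HasISDAtMost I d) :
    posetWidth {E | IsMeetIrreducibleExtent I E} / 2 ≤ isd I ∧
    isd I ≤ posetWidth {E | IsMeetIrreducibleExtent I E} :=
  isd_bounds_via_width_general I hdef
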